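/- arXiv:1912.09762 — 4 statements merged into one kernel-verified Lean document; each statement's English description precedes it below -/
import Mathlib

section
/- Let Q̂ be the (N+1)×(N+1) complex matrix with entries Q̂_{j,m} = 1/(n_j - p_m) for j ∈ {1,…,N} and Q̂_{N+1,m} = 1 for all m ∈ {1,…,N+1}. If the numbers n_1,…,n_N are pairwise distinct, the numbers p_1,…,p_{N+1} are pairwise distinct, and n_j ≠ p_m for all j, m, then Q̂ is invertible. -/
/-!
A kernel vector `v` of the matrix gives the polynomial `f = ∑ᵢ vᵢ ∏_{l ≠ i} (X - p_l)`, which is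
the Lagrange interpolant on the nodes `p` of the values `vᵢ / wᵢ` (`wᵢ` the barycentric weights).
Its `X^N`-coefficient is `∑ᵢ vᵢ`, killed by the last row, and `f(n_j)` is a nonzero multiple of
`∑ᵢ vᵢ / (n_j - pᵢ)`, killed by row `j`. So `f` has degree `< N` and `N` distinct roots, hence
`f = 0`, and `vᵢ = wᵢ f(pᵢ) = 0`.
-/

open Polynomial Finset Lagrange

section

variable {F ι : Type*} [Field F] [Fintype ι] [DecidableEq ι] {p : ι → F}

theorem coeff_interpolate_div_nodalWeight (hp : Function.Injective p) (v : ι → F) :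
    (interpolate univ p fun i => v i / nodalWeight univ p i).coeff (Fintype.card ι - 1) =
      ∑ i, v i := by
  rw [← card_univ, coeff_eq_sum hp.injOn (degree_interpolate_lt _ hp.injOn)]
  refine sum_congr rfl fun i _ => ?_
  have hw := nodalWeight_ne_zero hp.injOn (mem_univ i)
  rw [nodalWeight, prod_inv_distrib, ne_eq, inv_eq_zero] at hw
  rw [eval_interpolate_at_node _ hp.injOn (mem_univ i), nodalWeight, prod_inv_distrib,
    div_div, inv_mul_cancel₀ hw, div_one]

theorem eval_interpolate_div_nodalWeight (hp : Function.Injective p) {x : F} (hx : ∀ i, x ≠ p i)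
    (v : ι → F) :
    (interpolate univ p fun i => v i / nodalWeight univ p i).eval x =
      (nodal univ p).eval x * ∑ i, v i / (x - p i) := by
  rw [eval_interpolate_not_at_node _ fun i _ => hx i]
  congr 1
  refine sum_congr rfl fun i _ => ?_
  have hw := nodalWeight_ne_zero hp.injOn (mem_univ i)
  field_simp

theorem degree_lt_pred_of_degree_lt_of_coeff_eq_zero {R : Type*} [Semiring R] {f : R[X]} {k : ℕ}
    (hf : f.degree < k) (hcoeff : f.coeff (k - 1) = 0) : f.degree < ↑(k - 1) := by
  rw [degree_lt_iff_coeff_zero] at hf ⊢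
  intro m hm
  rcases hm.eq_or_lt with rfl | hm
  · exact hcoeff
  · exact hf m (by omega)

theorem eq_zero_of_sum_eq_zero_of_sum_div_sub_eq_zero {κ : Type*} [Fintype κ] {n : κ → F}
    (hp : Function.Injective p) (hn : Function.Injective n) (hnp : ∀ j i, n j ≠ p i)
    (hcard : Fintype.card ι ≤ Fintype.card κ + 1) {v : ι → F} (hsum : ∑ i, v i = 0)
    (hrows : ∀ j, ∑ i, v i / (n j - p i) = 0) : v = 0 := by
  set r : ι → F := fun i => v i / nodalWeight univ p i
  have hdeg : (interpolate univ p r).degree < ↑(Fintype.card ι - 1) :=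
    degree_lt_pred_of_degree_lt_of_coeff_eq_zero
      (card_univ (α := ι) ▸ degree_interpolate_lt _ hp.injOn)
      (by rw [coeff_interpolate_div_nodalWeight hp, hsum])
  have hzero : interpolate univ p r = 0 := by
    refine eq_zero_of_degree_lt_of_eval_index_eq_zero (s := univ) hn.injOn ?_ fun j _ => ?_
    · exact hdeg.trans_le (by rw [card_univ]; exact_mod_cast (by omega))
    · rw [eval_interpolate_div_nodalWeight hp (hnp j), hrows, mul_zero]
  funext i
  have hnode := eval_interpolate_at_node r hp.injOn (mem_univ i)
  rw [hzero, eval_zero, eq_comm, div_eq_zero_iff] at hnode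
  exact hnode.resolve_right (nodalWeight_ne_zero hp.injOn (mem_univ i))

end

theorem stmt0_general (N : ℕ) (n : Fin N → ℂ) (p : Fin (N + 1) → ℂ)
    (hn : Function.Injective n) (hp : Function.Injective p)
    (hnp : ∀ j m, n j ≠ p m) :
    IsUnit (Matrix.of (fun j m : Fin (N + 1) =>
      if h : (j : ℕ) < N then 1 / (n ⟨j, h⟩ - p m) else 1)) := by
  rw [Matrix.isUnit_iff_isUnit_det, isUnit_iff_ne_zero, Ne, ← Matrix.exists_mulVec_eq_zero_iff]
  rintro ⟨v, hv, hMv⟩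
  refine hv (eq_zero_of_sum_eq_zero_of_sum_div_sub_eq_zero hp hn hnp (by simp) ?_ fun j => ?_)
  · simpa [Matrix.mulVec, dotProduct] using congrFun hMv (Fin.last N)
  · simpa [Matrix.mulVec, dotProduct, div_eq_inv_mul] using congrFun hMv j.castSucc

/-- The augmented Cauchy-type matrix Q̂ with Q̂_{j,m} = 1/(n_j - p_m) for j ≤ N
and last row all ones is invertible when the n's are pairwise distinct, the p's are
pairwise distinct, and n_j ≠ p_m for all j, m. -/
theorem stmt0 (N : ℕ) (hN : 0 < N) (n : Fin N → ℂ) (p : Fin (N + 1) → ℂ)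
    (hn : Function.Injective n) (hp : Function.Injective p)
    (hnp : ∀ j m, n j ≠ p m) :
    IsUnit (Matrix.of (fun j m : Fin (N + 1) =>
      if h : (j : ℕ) < N then 1 / (n ⟨j, h⟩ - p m) else 1)) :=
  stmt0_general N n p hn hp hnp
end

section
/- Let k, ρ ∈ ℂ with k² ≠ ρ². Then for all x ∈ [-1,1], ∫_{-1}^{1} e^{-k|x-x'|} cosh(ρ x') dx' = [2k·cosh(ρx) - 2 e^{-k} cosh(kx)·(k·cosh(ρ) + ρ·sinh(ρ))]/(k² - ρ²). -/
/-!
Split the integral at `x' = x`: on each side `e^{-k|x - x'|}` is `e^{∓k x} e^{±k x'}`, and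
`e^{c t} (c cosh(ρ t) - ρ sinh(ρ t)) / (c² - ρ²)` is a primitive of `e^{c t} cosh(ρ t)`.
The boundary terms at `x' = x` combine, via `e^{kx} e^{-kx} = 1`, to `2k cosh(ρx) / (k² - ρ²)`,
and those at `x' = ±1` to the `cosh(kx)` term.
-/

open Complex intervalIntegral

noncomputable section

def expMulCoshPrimitive (c ρ z : ℂ) : ℂ :=
  exp (c * z) * (c * cosh (ρ * z) - ρ * sinh (ρ * z)) / (c ^ 2 - ρ ^ 2)

theorem hasDerivAt_expMulCoshPrimitive {c ρ : ℂ} (h : c ^ 2 ≠ ρ ^ 2) (z : ℂ) :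
    HasDerivAt (expMulCoshPrimitive c ρ) (exp (c * z) * cosh (ρ * z)) z := by
  have hc : HasDerivAt (fun z : ℂ => c * z) c z := by
    simpa using (hasDerivAt_id z).const_mul c
  have hρ : HasDerivAt (fun z : ℂ => ρ * z) ρ z := by
    simpa using (hasDerivAt_id z).const_mul ρ
  refine ((hc.cexp.mul ((hρ.ccosh.const_mul c).sub (hρ.csinh.const_mul ρ))).div_const
    (c ^ 2 - ρ ^ 2)).congr_deriv ?_
  rw [div_eq_iff (sub_ne_zero.mpr h)]
  simp only [Pi.sub_apply]
  ring

theorem integral_exp_mul_cosh {c ρ : ℂ} (h : c ^ 2 ≠ ρ ^ 2) (a b : ℝ) :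
    ∫ t in a..b, exp (c * t) * cosh (ρ * t) =
      expMulCoshPrimitive c ρ b - expMulCoshPrimitive c ρ a := by
  refine integral_eq_sub_of_hasDerivAt
    (fun t _ => (hasDerivAt_expMulCoshPrimitive h t).comp_ofReal) ?_
  exact Continuous.intervalIntegrable (by fun_prop) a b

theorem integral_exp_mul_abs_sub {f : ℝ → ℂ} (hf : Continuous f) (k : ℂ) {a b x : ℝ}
    (hx : x ∈ Set.Icc a b) :
    ∫ t in a..b, exp (-k * (|x - t| : ℝ)) * f t =
      exp (-(k * x)) * (∫ t in a..x, exp (k * t) * f t) +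
        exp (k * x) * ∫ t in x..b, exp (-k * t) * f t := by
  have hcont : Continuous fun t : ℝ => exp (-k * (|x - t| : ℝ)) * f t := by fun_prop
  rw [← integral_add_adjacent_intervals (hcont.intervalIntegrable a x)
    (hcont.intervalIntegrable x b), ← integral_const_mul, ← integral_const_mul]
  congr 1 <;> refine integral_congr fun t ht => ?_
  · rw [Set.uIcc_of_le hx.1] at ht
    simp only [abs_of_nonneg (sub_nonneg.mpr ht.2), ← mul_assoc, ← exp_add]
    push_cast
    ring_nf
  · rw [Set.uIcc_of_le hx.2] at ht
    simp only [abs_of_nonpos (sub_nonpos.mpr ht.1), ← mul_assoc, ← exp_add]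
    push_cast
    ring_nf

end

/-- ∫_{-1}^{1} e^{-k|x-x'|} cosh(ρx') dx'
    = (2k cosh(ρx) - 2 e^{-k} cosh(kx)(k cosh ρ + ρ sinh ρ))/(k² - ρ²). -/
theorem stmt10 (k ρ : ℂ) (hkρ : k ^ 2 ≠ ρ ^ 2) (x : ℝ) (hx : x ∈ Set.Icc (-1:ℝ) 1) :
    (∫ x' in (-1:ℝ)..1,
        Complex.exp (-k * Complex.ofReal |x - x'|) * Complex.cosh (ρ * (x' : ℂ))) =
      (2 * k * Complex.cosh (ρ * (x : ℂ))
        - 2 * Complex.exp (-k) * Complex.cosh (k * (x : ℂ))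
            * (k * Complex.cosh ρ + ρ * Complex.sinh ρ)) / (k ^ 2 - ρ ^ 2) := by
  have hneg : (-k) ^ 2 ≠ ρ ^ 2 := by rwa [neg_sq]
  rw [integral_exp_mul_abs_sub (by fun_prop) k hx, integral_exp_mul_cosh hkρ,
    integral_exp_mul_cosh hneg]
  have hexp : exp (k * x) * exp (-(k * x)) = 1 := by rw [← exp_add, add_neg_cancel, exp_zero]
  simp only [expMulCoshPrimitive, neg_sq, ofReal_neg, ofReal_one, mul_neg, neg_mul, mul_one, cosh_neg,
    sinh_neg]
  linear_combination (2 * k * cosh (ρ * x) / (k ^ 2 - ρ ^ 2)) * hexp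
    + (exp (-k) * (k * cosh ρ + ρ * sinh ρ) / (k ^ 2 - ρ ^ 2)) * two_cosh (k * x)
end

section
/- Let k, ρ ∈ ℂ with k² ≠ ρ². Then for all x ∈ [-1,1], ∫_{-1}^{1} e^{-k|x-x'|} sinh(ρ x') dx' = [2k·sinh(ρx) - 2 e^{-k} sinh(kx)·(ρ·cosh(ρ) + k·sinh(ρ))]/(k² - ρ²). -/
/-!
Split the integral at `x' = x`. On each side the kernel factors as
`e^{∓kx} e^{±kx'}`, and `e^{cx'} sinh(ρx')` has the elementary primitive
`e^{cx'} (c sinh(ρx') - ρ cosh(ρx')) / (c² - ρ²)` whenever `c² ≠ ρ²`.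
Applying this with `c = k` on `[-1, x]` and `c = -k` on `[x, 1]` gives the closed form.
-/

open Complex intervalIntegral

lemma hasDerivAt_exp_mul_sinh_primitive (c ρ : ℂ) (h : c ^ 2 ≠ ρ ^ 2) (z : ℂ) :
    HasDerivAt (fun s => exp (c * s) * (c * sinh (ρ * s) - ρ * cosh (ρ * s)) / (c ^ 2 - ρ ^ 2))
      (exp (c * z) * sinh (ρ * z)) z := by
  have hlin (a : ℂ) : HasDerivAt (fun s => a * s) a z := by
    simpa using (hasDerivAt_id z).const_mul a
  have h' := (((hlin c).cexp).mul (((hlin ρ).csinh.const_mul c).sub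
    ((hlin ρ).ccosh.const_mul ρ))).div_const (c ^ 2 - ρ ^ 2)
  refine h'.congr_deriv ?_
  rw [Pi.sub_apply, div_eq_iff (sub_ne_zero.mpr h)]
  ring

lemma integral_exp_mul_sinh (c ρ : ℂ) (h : c ^ 2 ≠ ρ ^ 2) (a b : ℝ) :
    ∫ t in a..b, exp (c * t) * sinh (ρ * t) =
      exp (c * b) * (c * sinh (ρ * b) - ρ * cosh (ρ * b)) / (c ^ 2 - ρ ^ 2)
        - exp (c * a) * (c * sinh (ρ * a) - ρ * cosh (ρ * a)) / (c ^ 2 - ρ ^ 2) :=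
  integral_eq_sub_of_hasDerivAt
    (fun t _ => (hasDerivAt_exp_mul_sinh_primitive c ρ h t).comp_ofReal)
    (Continuous.intervalIntegrable (by fun_prop) a b)

lemma exp_neg_mul_abs_sub_of_le (k : ℂ) {x t : ℝ} (h : t ≤ x) :
    exp (-k * |x - t|) = exp (-k * x) * exp (k * t) := by
  rw [abs_of_nonneg (sub_nonneg.mpr h), ← exp_add]
  push_cast
  ring_nf

lemma exp_neg_mul_abs_sub_of_ge (k : ℂ) {x t : ℝ} (h : x ≤ t) :
    exp (-k * |x - t|) = exp (k * x) * exp (-k * t) := by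
  rw [abs_sub_comm, abs_of_nonneg (sub_nonneg.mpr h), ← exp_add]
  push_cast
  ring_nf

/-- ∫_{-1}^{1} e^{-k|x-x'|} sinh(ρx') dx'
    = (2k sinh(ρx) - 2 e^{-k} sinh(kx)(ρ cosh ρ + k sinh ρ))/(k² - ρ²). -/
theorem stmt11 (k ρ : ℂ) (hkρ : k ^ 2 ≠ ρ ^ 2) (x : ℝ) (hx : x ∈ Set.Icc (-1:ℝ) 1) :
    (∫ x' in (-1:ℝ)..1,
        Complex.exp (-k * Complex.ofReal |x - x'|) * Complex.sinh (ρ * (x' : ℂ))) =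
      (2 * k * Complex.sinh (ρ * (x : ℂ))
        - 2 * Complex.exp (-k) * Complex.sinh (k * (x : ℂ))
            * (ρ * Complex.cosh ρ + k * Complex.sinh ρ)) / (k ^ 2 - ρ ^ 2) := by
  have hcont : Continuous fun t : ℝ => exp (-k * |x - t|) * sinh (ρ * t) := by fun_prop
  have hleft : ∫ t in (-1:ℝ)..x, exp (-k * |x - t|) * sinh (ρ * t)
      = exp (-k * x) * ∫ t in (-1:ℝ)..x, exp (k * t) * sinh (ρ * t) := by
    rw [← integral_const_mul]
    refine integral_congr fun t ht => ?_
    rw [Set.uIcc_of_le hx.1] at ht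
    simp only [exp_neg_mul_abs_sub_of_le k ht.2, mul_assoc]
  have hright : ∫ t in x..(1:ℝ), exp (-k * |x - t|) * sinh (ρ * t)
      = exp (k * x) * ∫ t in x..(1:ℝ), exp (-k * t) * sinh (ρ * t) := by
    rw [← integral_const_mul]
    refine integral_congr fun t ht => ?_
    rw [Set.uIcc_of_le hx.2] at ht
    simp only [exp_neg_mul_abs_sub_of_ge k ht.1, mul_assoc]
  rw [← integral_add_adjacent_intervals (hcont.intervalIntegrable _ x)
    (hcont.intervalIntegrable x _), hleft, hright, integral_exp_mul_sinh k ρ hkρ,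
    integral_exp_mul_sinh (-k) ρ (by rwa [neg_sq])]
  push_cast
  simp only [mul_neg, neg_mul, mul_one, neg_neg, neg_sq, cosh_neg, exp_neg, sinh]
  field_simp
  ring
end

section
/- Let A₀ be the generator of the shift semigroup T₀ on X = C([-h,0]; Y) associated with a C₀-semigroup S on Y with generator B, i.e. D(A₀) = { φ ∈ C¹([-h,0];Y) : φ(0) ∈ D(B), φ'(0) = Bφ(0) } and A₀φ = φ'. Then λ ∈ ℂ is an eigenvalue of A₀ if and only if λ is an eigenvalue of B; moreover φ is an eigenvector of A₀ for λ if and only if φ(θ) = e^{λθ} q for some nonzero q ∈ D(B) with Bq = λq. -/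
/-!
An eigenvector `φ` of `A₀` solves `φ' = λφ` on `[-h, 0]`, so `θ ↦ e^{-λθ} φ θ` has zero
derivative there and `φ θ = e^{λθ} φ 0`. For such `φ` the boundary condition
`φ'(0) = B φ(0)` says exactly `B φ(0) = λ φ(0)`, and `φ ≠ 0` iff `φ 0 ≠ 0`.
-/

open Set

section

variable {Y : Type*} [NormedAddCommGroup Y] [NormedSpace ℂ Y]

theorem hasDerivAt_cexp_mul_ofReal (lam : ℂ) (t : ℝ) :
    HasDerivAt (fun t : ℝ => Complex.exp (lam * t)) (lam * Complex.exp (lam * t)) t := by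
  simpa [mul_comm] using (((hasDerivAt_id t).ofReal_comp).const_mul lam).cexp

theorem derivWithin_cexp_mul_smul {s : Set ℝ} {t : ℝ} (hs : UniqueDiffWithinAt ℝ s t)
    (lam : ℂ) (q : Y) :
    derivWithin (fun t : ℝ => Complex.exp (lam * t) • q) s t =
      lam • Complex.exp (lam * t) • q := by
  rw [((hasDerivAt_cexp_mul_ofReal lam t).smul_const q).hasDerivWithinAt.derivWithin hs, smul_smul]

theorem contDiff_cexp_mul_smul (lam : ℂ) (q : Y) :
    ContDiff ℝ 1 (fun t : ℝ => Complex.exp (lam * t) • q) :=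
  (Complex.contDiff_exp.comp (contDiff_const.mul Complex.ofRealCLM.contDiff)).smul contDiff_const

theorem Convex.exists_eqOn_cexp_mul_smul {s : Set ℝ} (hs : Convex ℝ s) {lam : ℂ}
    {f : ℝ → Y} (hf : ∀ t ∈ s, HasDerivWithinAt f (lam • f t) s t) :
    ∃ q : Y, ∀ t ∈ s, f t = Complex.exp (lam * t) • q := by
  rcases s.eq_empty_or_nonempty with rfl | ⟨t₀, ht₀⟩
  · exact ⟨0, fun t ht => ht.elim⟩
  set g : ℝ → Y := fun t => Complex.exp (-lam * t) • f t
  -- `t ↦ e^{-λt} f t` has derivative `-λ e^{-λt} f t + e^{-λt} λ f t = 0`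
  have hg : ∀ t ∈ s, HasDerivWithinAt g 0 s t := fun t ht => by
    convert (hasDerivAt_cexp_mul_ofReal (-lam) t).hasDerivWithinAt.smul (hf t ht) using 1
    · rfl
    rw [smul_smul, ← add_smul, mul_comm, ← add_mul, add_neg_cancel, zero_mul, zero_smul]
  have hg_const : ∀ t ∈ s, g t = g t₀ := fun t ht => by
    simpa [sub_eq_zero] using
      hs.norm_image_sub_le_of_norm_hasDerivWithin_le hg (fun _ _ => norm_zero.le) ht₀ ht
  refine ⟨g t₀, fun t ht => ?_⟩
  rw [← hg_const t ht, smul_smul, ← Complex.exp_add]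
  simp

theorem Convex.derivWithin_eq_smul_iff_exists_eqOn_cexp_mul_smul {s : Set ℝ}
    (hs : Convex ℝ s) (hs' : UniqueDiffOn ℝ s) {lam : ℂ} {f : ℝ → Y}
    (hf : DifferentiableOn ℝ f s) :
    (∀ t ∈ s, derivWithin f s t = lam • f t) ↔
      ∃ q : Y, ∀ t ∈ s, f t = Complex.exp (lam * t) • q := by
  constructor
  · intro hode
    exact hs.exists_eqOn_cexp_mul_smul fun t ht => hode t ht ▸ (hf t ht).hasDerivWithinAt
  · rintro ⟨q, hq⟩ t ht
    rw [derivWithin_congr hq (hq t ht), derivWithin_cexp_mul_smul (hs' t ht), hq t ht]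

theorem eigenvector_iff_eqOn_cexp_mul_smul {h : ℝ} (hh : 0 < h) {DB : Set Y} {B : Y → Y}
    {lam : ℂ} {φ : ℝ → Y} (hφ : ContDiffOn ℝ 1 φ (Icc (-h) 0)) (hφ0 : φ 0 ∈ DB)
    (hB : derivWithin φ (Icc (-h) 0) 0 = B (φ 0)) :
    ((∃ θ ∈ Icc (-h) 0, φ θ ≠ 0) ∧
        ∀ θ ∈ Icc (-h) 0, derivWithin φ (Icc (-h) 0) θ = lam • φ θ) ↔
      ∃ q, q ∈ DB ∧ q ≠ 0 ∧ B q = lam • q ∧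
        ∀ θ ∈ Icc (-h) 0, φ θ = Complex.exp (lam * (θ : ℂ)) • q := by
  have h0 : (0 : ℝ) ∈ Icc (-h) 0 := ⟨neg_nonpos.2 hh.le, le_rfl⟩
  have hode_iff := (convex_Icc (-h) 0).derivWithin_eq_smul_iff_exists_eqOn_cexp_mul_smul
    (uniqueDiffOn_Icc (neg_neg_of_pos hh)) (lam := lam) (hφ.differentiableOn one_ne_zero)
  constructor
  · rintro ⟨⟨θ, hθ, hφθ⟩, hode⟩
    obtain ⟨q, hq⟩ := hode_iff.1 hode
    have hφq : φ 0 = q := by simpa using hq 0 h0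
    refine ⟨q, hφq ▸ hφ0, ?_, ?_, hq⟩
    · rintro rfl
      exact hφθ (by simpa using hq θ hθ)
    · rw [← hφq, ← hB, hode 0 h0]
  · rintro ⟨q, -, hq0, -, hq⟩
    have hφq : φ 0 = q := by simpa using hq 0 h0
    exact ⟨⟨0, h0, hφq ▸ hq0⟩, hode_iff.2 ⟨q, hq⟩⟩

end

theorem stmt13_general {Y : Type*} [NormedAddCommGroup Y] [NormedSpace ℂ Y]
    (h : ℝ) (hh : 0 < h) (DB : Set Y) (B : Y → Y) (lam : ℂ) :
    ((∃ φ : ℝ → Y, ContDiffOn ℝ 1 φ (Set.Icc (-h) 0) ∧ φ 0 ∈ DB ∧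
        derivWithin φ (Set.Icc (-h) 0) 0 = B (φ 0) ∧
        (∃ θ ∈ Set.Icc (-h) 0, φ θ ≠ 0) ∧
        (∀ θ ∈ Set.Icc (-h) 0, derivWithin φ (Set.Icc (-h) 0) θ = lam • φ θ)) ↔
      (∃ q, q ∈ DB ∧ q ≠ 0 ∧ B q = lam • q)) ∧
    (∀ φ : ℝ → Y, ContDiffOn ℝ 1 φ (Set.Icc (-h) 0) → φ 0 ∈ DB →
      derivWithin φ (Set.Icc (-h) 0) 0 = B (φ 0) →
      (((∃ θ ∈ Set.Icc (-h) 0, φ θ ≠ 0) ∧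
          ∀ θ ∈ Set.Icc (-h) 0, derivWithin φ (Set.Icc (-h) 0) θ = lam • φ θ) ↔
        ∃ q, q ∈ DB ∧ q ≠ 0 ∧ B q = lam • q ∧
          ∀ θ ∈ Set.Icc (-h) 0, φ θ = Complex.exp (lam * (θ : ℂ)) • q)) := by
  refine ⟨⟨?_, ?_⟩, fun φ hφ hφ0 hB => eigenvector_iff_eqOn_cexp_mul_smul hh hφ hφ0 hB⟩
  · rintro ⟨φ, hφ, hφ0, hB, hev⟩
    obtain ⟨q, hq, hq0, hBq, -⟩ := (eigenvector_iff_eqOn_cexp_mul_smul hh hφ hφ0 hB).1 hev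
    exact ⟨q, hq, hq0, hBq⟩
  · rintro ⟨q, hq, hq0, hBq⟩
    have hφ : ContDiffOn ℝ 1 (fun t : ℝ => Complex.exp (lam * t) • q) (Icc (-h) 0) :=
      (contDiff_cexp_mul_smul lam q).contDiffOn
    have hφ0 : Complex.exp (lam * (0 : ℝ)) • q ∈ DB := by simpa using hq
    have hB : derivWithin (fun t : ℝ => Complex.exp (lam * t) • q) (Icc (-h) 0) 0 =
        B (Complex.exp (lam * (0 : ℝ)) • q) := by
      have h0 : (0 : ℝ) ∈ Icc (-h) 0 := ⟨neg_nonpos.2 hh.le, le_rfl⟩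
      simp [derivWithin_cexp_mul_smul (uniqueDiffOn_Icc (neg_neg_of_pos hh) 0 h0), hBq]
    exact ⟨_, hφ, hφ0, hB, (eigenvector_iff_eqOn_cexp_mul_smul hh hφ hφ0 hB).2
      ⟨q, hq, hq0, hBq, fun _ _ => rfl⟩⟩

/-- Eigenvalue correspondence between the generator A₀ of the shift semigroup on
X = C([-h,0];Y) (with domain {φ ∈ C¹ : φ(0) ∈ D(B), φ'(0) = Bφ(0)} and A₀φ = φ')
and the operator B: λ is an eigenvalue of A₀ iff it is an eigenvalue of B, and the
eigenvectors of A₀ are exactly θ ↦ e^{λθ} q with q a (nonzero) eigenvector of B. -/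
theorem stmt13 {Y : Type*} [NormedAddCommGroup Y] [NormedSpace ℂ Y] [CompleteSpace Y]
    (h : ℝ) (hh : 0 < h) (DB : Set Y) (B : Y → Y) (lam : ℂ) :
    ((∃ φ : ℝ → Y, ContDiffOn ℝ 1 φ (Set.Icc (-h) 0) ∧ φ 0 ∈ DB ∧
        derivWithin φ (Set.Icc (-h) 0) 0 = B (φ 0) ∧
        (∃ θ ∈ Set.Icc (-h) 0, φ θ ≠ 0) ∧
        (∀ θ ∈ Set.Icc (-h) 0, derivWithin φ (Set.Icc (-h) 0) θ = lam • φ θ)) ↔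
      (∃ q, q ∈ DB ∧ q ≠ 0 ∧ B q = lam • q)) ∧
    (∀ φ : ℝ → Y, ContDiffOn ℝ 1 φ (Set.Icc (-h) 0) → φ 0 ∈ DB →
      derivWithin φ (Set.Icc (-h) 0) 0 = B (φ 0) →
      (((∃ θ ∈ Set.Icc (-h) 0, φ θ ≠ 0) ∧
          ∀ θ ∈ Set.Icc (-h) 0, derivWithin φ (Set.Icc (-h) 0) θ = lam • φ θ) ↔
        ∃ q, q ∈ DB ∧ q ≠ 0 ∧ B q = lam • q ∧
          ∀ θ ∈ Set.Icc (-h) 0, φ θ = Complex.exp (lam * (θ : ℂ)) • q)) :=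
  stmt13_general h hh DB B lam
end
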